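/- In the extended Black–Scholes model with an earnings announcement at time T_e, for 0 ≤ t < T_e ≤ T the price of a European call with strike K > 0 and maturity T satisfies C(t, S_t) = C_BS(T−t, S_t; √(σ² + σ_e²/(T−t)), K, r), where C(t, S_t) = E[e^{−r(T−t)}(S_T − K)^+]. -/

import Mathlib

open MeasureTheory ProbabilityTheory

/-- The standard normal cumulative distribution function `Φ`. -/
noncomputable def stdNormalCDF (x : ℝ) : ℝ := ((gaussianReal 0 1) (Set.Iic x)).toReal

/-- The Black–Scholes quantity `d₁`. -/
noncomputable def d1 (τ S σ K r : ℝ) : ℝ :=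
  (Real.log (S / K) + (r + σ ^ 2 / 2) * τ) / (σ * Real.sqrt τ)

/-- The Black–Scholes quantity `d₂ = d₁ − σ√τ`. -/
noncomputable def d2 (τ S σ K r : ℝ) : ℝ := d1 τ S σ K r - σ * Real.sqrt τ

/-- The Black–Scholes call price `C_BS(τ, S; σ, K, r) = S·Φ(d₁) − K·e^{−rτ}·Φ(d₂)`. -/
noncomputable def BSCall (τ S σ K r : ℝ) : ℝ :=
  S * stdNormalCDF (d1 τ S σ K r) - K * Real.exp (-r * τ) * stdNormalCDF (d2 τ S σ K r)

/-!
The log-return `(r − σ²/2)τ + σG + Z_e` is a sum of independent Gaussians, hence Gaussian with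
mean `(r − σ_tot²/2)τ` and variance `σ_tot²τ`, where `σ_tot² = σ² + σ_e²/τ`. This is exactly the
law of the Black–Scholes log-return at volatility `σ_tot`, so the price is `C_BS` at `σ_tot`. The
Black–Scholes formula itself comes from splitting the payoff at `log (K/S)` and tilting the
Gaussian by `eˣ`, which shifts its mean by its variance.
-/

open Real NNReal Set

namespace ProbabilityTheory

lemma gaussianReal_real_Ioi (m : ℝ) {v : ℝ≥0} (hv : v ≠ 0) (b : ℝ) :
    (gaussianReal m v).real (Ioi b) = stdNormalCDF ((m - b) / √v) := by
  have hsqrt : 0 < √(v : ℝ) := Real.sqrt_pos.mpr (by positivity)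
  have hstd : (gaussianReal 0 1).map (fun y ↦ m - √v * y) = gaussianReal m v := by
    rw [← Function.comp_def (m - ·) (√v * ·), ← Measure.map_map (by fun_prop) (by fun_prop),
      gaussianReal_map_const_mul, gaussianReal_map_const_sub]
    congr 1
    · ring
    · ext; simp
  have hpre : (fun y ↦ m - √v * y) ⁻¹' Ioi b = Iio ((m - b) / √v) := by
    ext y
    simp only [mem_preimage, mem_Ioi, mem_Iio, lt_div_iff₀ hsqrt]
    constructor <;> intro h <;> linarith
  have := nullSingletonClass_gaussianReal (μ := 0) one_ne_zero
  rw [← hstd, map_measureReal_apply (by fun_prop) measurableSet_Ioi, hpre,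
    measureReal_congr Iio_ae_eq_Iic, stdNormalCDF, measureReal_def]

lemma gaussianPDFReal_mul_exp (m : ℝ) {v : ℝ≥0} (hv : v ≠ 0) (x : ℝ) :
    gaussianPDFReal m v x * exp x = exp (m + v / 2) * gaussianPDFReal (m + v) v x := by
  have : (0 : ℝ) < v := by positivity
  simp only [gaussianPDFReal]
  rw [mul_assoc, ← exp_add, mul_left_comm, ← exp_add]
  congr 2
  field_simp
  ring

lemma setIntegral_exp_gaussianReal (m : ℝ) {v : ℝ≥0} (hv : v ≠ 0) {s : Set ℝ}
    (hs : MeasurableSet s) :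
    ∫ x in s, exp x ∂gaussianReal m v = exp (m + v / 2) * (gaussianReal (m + v) v).real s := by
  rw [← integral_indicator hs, integral_gaussianReal_eq_integral_smul hv]
  have hdens : ∀ x, gaussianPDFReal m v x • s.indicator exp x
      = s.indicator (fun x ↦ exp (m + v / 2) * gaussianPDFReal (m + v) v x) x := by
    intro x
    by_cases hx : x ∈ s <;> simp [hx, smul_eq_mul, gaussianPDFReal_mul_exp m hv]
  simp_rw [hdens]
  rw [integral_indicator hs, integral_const_mul, measureReal_def,
    gaussianReal_apply_eq_integral _ hv,
    ENNReal.toReal_ofReal (setIntegral_nonneg hs fun x _ ↦ gaussianPDFReal_nonneg _ _ x)]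

lemma IndepFun.hasLaw_const_mul_add_of_gaussianReal {Ω : Type*} [MeasurableSpace Ω]
    {μ : Measure Ω} {G Z : Ω → ℝ} {mG mZ : ℝ} {vG vZ : ℝ≥0} (hindep : IndepFun G Z μ)
    (hG : μ.map G = gaussianReal mG vG) (hZ : μ.map Z = gaussianReal mZ vZ) (c : ℝ) :
    HasLaw (fun ω ↦ c * G ω + Z ω)
      (gaussianReal (c * mG + mZ) (.mk (c ^ 2) (sq_nonneg c) * vG + vZ)) μ := by
  have hG' : HasLaw G (gaussianReal mG vG) μ :=
    ⟨.of_map_ne_zero (hG ▸ IsProbabilityMeasure.ne_zero _), hG⟩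
  have hZ' : HasLaw Z (gaussianReal mZ vZ) μ :=
    ⟨.of_map_ne_zero (hZ ▸ IsProbabilityMeasure.ne_zero _), hZ⟩
  rw [← gaussianReal_conv_gaussianReal]
  exact (hindep.comp (measurable_const_mul c) measurable_id).hasLaw_fun_add
    (gaussianReal_const_mul hG' c) hZ'

end ProbabilityTheory

lemma max_mul_exp_sub_eq_indicator {S K : ℝ} (hS : 0 < S) (hK : 0 < K) (x : ℝ) :
    max (S * exp x - K) 0 = (Ioi (log (K / S))).indicator (fun x ↦ S * exp x - K) x := by
  have hITM : log (K / S) < x ↔ K < S * exp x := by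
    rw [log_lt_iff_lt_exp (by positivity), div_lt_iff₀' hS]
  by_cases hx : log (K / S) < x
  · rw [indicator_of_mem (mem_Ioi.mpr hx), max_eq_left (by linarith [hITM.mp hx])]
  · rw [indicator_of_notMem (mt mem_Ioi.mp hx), max_eq_right (by linarith [hITM.not.mp hx])]

lemma integral_max_mul_exp_sub_gaussianReal (m : ℝ) {v : ℝ≥0} (hv : v ≠ 0) {S K : ℝ}
    (hS : 0 < S) (hK : 0 < K) :
    ∫ x, max (S * exp x - K) 0 ∂gaussianReal m v
      = S * exp (m + v / 2) * stdNormalCDF ((log (S / K) + m + v) / √v)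
        - K * stdNormalCDF ((log (S / K) + m) / √v) := by
  have hlog : log (K / S) = -log (S / K) := by
    rw [log_div hK.ne' hS.ne', log_div hS.ne' hK.ne']; ring
  have hexp : Integrable exp (gaussianReal m v) := by
    simpa using integrable_exp_mul_gaussianReal (μ := m) (v := v) 1
  simp_rw [max_mul_exp_sub_eq_indicator hS hK]
  rw [integral_indicator measurableSet_Ioi, integral_sub (hexp.const_mul S).integrableOn
    (integrable_const K), integral_const_mul, setIntegral_exp_gaussianReal m hv measurableSet_Ioi,
    setIntegral_const, gaussianReal_real_Ioi _ hv, gaussianReal_real_Ioi _ hv, hlog, smul_eq_mul]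
  ring_nf

theorem bsCall_eq_integral_gaussianReal {τ S σ K : ℝ} (r : ℝ) (hτ : 0 < τ) (hS : 0 < S)
    (hσ : 0 < σ) (hK : 0 < K) :
    BSCall τ S σ K r = exp (-r * τ)
      * ∫ x, max (S * exp x - K) 0 ∂gaussianReal ((r - σ ^ 2 / 2) * τ) (σ ^ 2 * τ).toNNReal := by
  have hv : ((σ ^ 2 * τ).toNNReal : ℝ) = σ ^ 2 * τ := coe_toNNReal _ (by positivity)
  have hsqrt : √(σ ^ 2 * τ) = σ * √τ := by rw [sqrt_mul (by positivity), sqrt_sq hσ.le]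
  rw [integral_max_mul_exp_sub_gaussianReal _ (by simp; positivity) hS hK, hv, hsqrt,
    BSCall, d2, d1]
  have hdisc : exp (-r * τ) * exp ((r - σ ^ 2 / 2) * τ + σ ^ 2 * τ / 2) = 1 := by
    rw [← exp_add]; ring_nf; exact exp_zero
  have hd1 : (log (S / K) + (r - σ ^ 2 / 2) * τ + σ ^ 2 * τ) / (σ * √τ)
      = (log (S / K) + (r + σ ^ 2 / 2) * τ) / (σ * √τ) := by
    ring_nf
  have hd2 : (log (S / K) + (r - σ ^ 2 / 2) * τ) / (σ * √τ)
      = (log (S / K) + (r + σ ^ 2 / 2) * τ) / (σ * √τ) - σ * √τ := by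
    have : 0 < √τ := sqrt_pos.mpr hτ
    field_simp
    rw [sq_sqrt hτ.le]
    ring
  rw [hd1, hd2]
  linear_combination -S * stdNormalCDF ((log (S / K) + (r + σ ^ 2 / 2) * τ) / (σ * √τ)) * hdisc

theorem extendedBS_call_price
    {Ω : Type*} [MeasurableSpace Ω] (μ : Measure Ω)
    (r σ σe t Te T S K : ℝ) (hσe : 0 < σe)
    (hS : 0 < S) (hK : 0 < K)
    (htTe : t < Te) (hTeT : Te ≤ T)
    (G Z : Ω → ℝ)
    (hG : Measure.map G μ = gaussianReal 0 (Real.toNNReal (T - t)))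
    (hZ : Measure.map Z μ = gaussianReal (-σe ^ 2 / 2) (Real.toNNReal (σe ^ 2)))
    (hindep : IndepFun G Z μ) :
    ∫ ω, Real.exp (-r * (T - t))
        * max (S * Real.exp ((r - σ ^ 2 / 2) * (T - t) + σ * G ω + Z ω) - K) 0 ∂μ
      = BSCall (T - t) S (Real.sqrt (σ ^ 2 + σe ^ 2 / (T - t))) K r := by
  have hτ : 0 < T - t := by linarith
  set σtot := √(σ ^ 2 + σe ^ 2 / (T - t))
  have hσtot : σtot ^ 2 = σ ^ 2 + σe ^ 2 / (T - t) := sq_sqrt (by positivity)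
  have hlaw : HasLaw (fun ω ↦ (r - σ ^ 2 / 2) * (T - t) + (σ * G ω + Z ω))
      (gaussianReal ((r - σtot ^ 2 / 2) * (T - t)) (σtot ^ 2 * (T - t)).toNNReal) μ := by
    convert gaussianReal_const_add (hindep.hasLaw_const_mul_add_of_gaussianReal hG hZ σ)
      ((r - σ ^ 2 / 2) * (T - t)) using 2
    · rw [hσtot]; field_simp; ring
    · have hvar : (σ ^ 2 + σe ^ 2 / (T - t)) * (T - t) = σ ^ 2 * (T - t) + σe ^ 2 := by
        field_simp
      ext
      simp [hσtot, hvar, hτ.le, sq_nonneg, NNReal.coe_mul,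
        coe_toNNReal _ (by positivity : 0 ≤ σ ^ 2 * (T - t) + σe ^ 2)]
  rw [bsCall_eq_integral_gaussianReal r hτ hS (sqrt_pos.mpr (by positivity)) hK,
    ← hlaw.integral_comp (by fun_prop), integral_const_mul]
  simp only [Function.comp_apply, add_assoc]
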